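/- arXiv:2312.04251 — 2 statements merged into one kernel-verified Lean document; each statement's English description precedes it below -/
import Mathlib

section
/- Let C = {(x, s) ∈ ℝⁿ × ℝ : ‖x‖₂ ≤ s} and suppose (x', s') ∉ C with s' > 0. Among all hyperplanes {(x,s) : ⟨a, x⟩ + b·s = 0} (with (a,b) ≠ 0) such that ⟨a, x⟩ + b·s ≤ 0 for all (x, s) ∈ C and ⟨a, x'⟩ + b·s' > 0, the hyperplane with a = x', b = −‖x'‖ achieves maximum Euclidean distance from (x', s'); this maximum distance equals (‖x'‖ − s')/√2. -/
theorem soc_max_distance_hyperplane {n : ℕ} (x' : EuclideanSpace ℝ (Fin n)) (s' : ℝ)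
    (hs' : 0 < s') (hout : ¬ ‖x'‖ ≤ s') :
    (∀ (a : EuclideanSpace ℝ (Fin n)) (b : ℝ), ¬ (a = 0 ∧ b = 0) →
        (∀ (x : EuclideanSpace ℝ (Fin n)) (s : ℝ), ‖x‖ ≤ s → (inner ℝ a x : ℝ) + b * s ≤ 0) →
        (inner ℝ a x' : ℝ) + b * s' > 0 →
        ((inner ℝ a x' : ℝ) + b * s') / Real.sqrt (‖a‖ ^ 2 + b ^ 2) ≤ (‖x'‖ - s') / Real.sqrt 2) ∧
      (∀ (x : EuclideanSpace ℝ (Fin n)) (s : ℝ), ‖x‖ ≤ s →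
          (inner ℝ x' x : ℝ) + (-‖x'‖) * s ≤ 0) ∧
      (inner ℝ x' x' : ℝ) + (-‖x'‖) * s' > 0 ∧
      ((inner ℝ x' x' : ℝ) + (-‖x'‖) * s') / Real.sqrt (‖x'‖ ^ 2 + ‖x'‖ ^ 2) =
        (‖x'‖ - s') / Real.sqrt 2 := by
  push_neg at hout
  have hR : 0 < ‖x'‖ := lt_trans hs' hout
  have hq : (0:ℝ) < Real.sqrt 2 := Real.sqrt_pos.mpr (by norm_num)
  have hq2 : (Real.sqrt 2) ^ 2 = 2 := Real.sq_sqrt (by norm_num)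
  refine ⟨?_, ?_, ?_, ?_⟩
  · intro a b hne hcone hsep
    have h1 : ‖a‖ * ‖a‖ + b * ‖a‖ ≤ 0 := by
      have := hcone a ‖a‖ le_rfl
      rwa [real_inner_self_eq_norm_mul_norm] at this
    have hb0 : b ≤ 0 := by
      have := hcone 0 1 (by simp)
      simpa using this
    have hab : ‖a‖ + b ≤ 0 := by
      rcases eq_or_lt_of_le (norm_nonneg a) with h | h
      · rw [← h]; simpa using hb0
      · nlinarith
    have hbneg : b < 0 := by
      rcases lt_or_eq_of_le hb0 with h | h
      · exact h
      · exfalso; apply hne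
        refine ⟨norm_le_zero_iff.mp (by linarith), h⟩
    have hD : 0 < Real.sqrt (‖a‖ ^ 2 + b ^ 2) := Real.sqrt_pos.mpr (by nlinarith)
    have hcs : (inner ℝ a x' : ℝ) ≤ ‖a‖ * ‖x'‖ := real_inner_le_norm a x'
    set t := ‖a‖ with ht
    set D := Real.sqrt (t ^ 2 + b ^ 2) with hDdef
    have ht0 : 0 ≤ t := norm_nonneg a
    have h3 : t - b ≤ Real.sqrt 2 * D := by
      have h4 : (t - b) ^ 2 ≤ 2 * (t ^ 2 + b ^ 2) := by nlinarith
      calc t - b = Real.sqrt ((t - b) ^ 2) := (Real.sqrt_sq (by linarith)).symm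
        _ ≤ Real.sqrt (2 * (t ^ 2 + b ^ 2)) := Real.sqrt_le_sqrt h4
        _ = Real.sqrt 2 * D := by rw [Real.sqrt_mul (by norm_num)]
    have key : t * ‖x'‖ + b * s' ≤ (‖x'‖ - s') / Real.sqrt 2 * D := by
      rw [div_mul_eq_mul_div, le_div_iff₀ hq]
      have h2 : t * ‖x'‖ + b * s' ≤ (‖x'‖ - s') * (t - b) / 2 := by nlinarith
      have hD0 : 0 ≤ D := Real.sqrt_nonneg _
      nlinarith [mul_le_mul_of_nonneg_right h2 hq.le,
        mul_le_mul_of_nonneg_left h3 (mul_nonneg (sub_nonneg.mpr hout.le) hq.le)]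
    rw [div_le_iff₀ hD]
    linarith [key, hcs]
  · intro x s hxs
    have h := real_inner_le_norm x' x
    nlinarith [norm_nonneg x, norm_nonneg x']
  · rw [real_inner_self_eq_norm_mul_norm]
    nlinarith
  · rw [real_inner_self_eq_norm_mul_norm]
    have h : Real.sqrt (‖x'‖ ^ 2 + ‖x'‖ ^ 2) = ‖x'‖ * Real.sqrt 2 := by
      rw [show ‖x'‖ ^ 2 + ‖x'‖ ^ 2 = ‖x'‖ ^ 2 * 2 by ring,
        Real.sqrt_mul (by positivity), Real.sqrt_sq (norm_nonneg x')]
    rw [h]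
    field_simp
    ring
end

section
/- Let x', y', w', z' be real numbers with w' + z' > 0 such that (x')² + (y')² > w'·z' (i.e., the point violates the rotated cone). Let n₀ = √((2x')² + (2y')² + (w'−z')²). Then the linear inequality 4x'·x + 4y'·y + ((w'−z') − n₀)·w + (−(w'−z') − n₀)·z ≤ 0 is valid for all (x, y, w, z) with w, z ≥ 0 and x² + y² ≤ wz, and it is violated by (x', y', w', z'). -/
set_option maxHeartbeats 1000000


theorem rotated_cone_max_distance_cut (x' y' w' z' : ℝ) (hpos : 0 < w' + z')
    (hviol : x' ^ 2 + y' ^ 2 > w' * z')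
    (n₀ : ℝ) (hn₀ : n₀ = Real.sqrt ((2 * x') ^ 2 + (2 * y') ^ 2 + (w' - z') ^ 2)) :
    (∀ x y w z : ℝ, 0 ≤ w → 0 ≤ z → x ^ 2 + y ^ 2 ≤ w * z →
        4 * x' * x + 4 * y' * y + ((w' - z') - n₀) * w + (-(w' - z') - n₀) * z ≤ 0) ∧
      4 * x' * x' + 4 * y' * y' + ((w' - z') - n₀) * w' + (-(w' - z') - n₀) * z' > 0 := by
  have hA : n₀ ^ 2 = (2 * x') ^ 2 + (2 * y') ^ 2 + (w' - z') ^ 2 := by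
    rw [hn₀]; exact Real.sq_sqrt (by positivity)
  have hn0 : 0 ≤ n₀ := hn₀ ▸ Real.sqrt_nonneg _
  have hgt : n₀ > w' + z' := by nlinarith [hA, sq_nonneg (n₀ - (w' + z'))]
  constructor
  · intro x y w z hw hz hc
    set sv := Real.sqrt ((2 * x) ^ 2 + (2 * y) ^ 2 + (w - z) ^ 2) with hsv
    have hsv0 : 0 ≤ sv := Real.sqrt_nonneg _
    have hB : sv ^ 2 = (2 * x) ^ 2 + (2 * y) ^ 2 + (w - z) ^ 2 := by
      rw [hsv]; exact Real.sq_sqrt (by positivity)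
    have hsvle : sv ≤ w + z := by
      have h1 : (2 * x) ^ 2 + (2 * y) ^ 2 + (w - z) ^ 2 ≤ (w + z) ^ 2 := by nlinarith
      calc sv ≤ Real.sqrt ((w + z) ^ 2) := Real.sqrt_le_sqrt h1
        _ = w + z := Real.sqrt_sq (by linarith)
    have hdot : 4 * x' * x + 4 * y' * y + (w' - z') * (w - z) ≤ n₀ * sv := by
      rcases eq_or_lt_of_le hsv0 with h | h
      · have hB0 : (2 * x) ^ 2 + (2 * y) ^ 2 + (w - z) ^ 2 = 0 := by
          rw [← hB, ← h]; ring
        have hx : x = 0 := by nlinarith [sq_nonneg (2 * x), sq_nonneg (2 * y), sq_nonneg (w - z)]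
        have hy : y = 0 := by nlinarith [sq_nonneg (2 * x), sq_nonneg (2 * y), sq_nonneg (w - z)]
        have hwz : w = z := by nlinarith [sq_nonneg (2 * x), sq_nonneg (2 * y), sq_nonneg (w - z)]
        rw [hx, hy, hwz, ← h]; ring_nf; exact le_refl 0
      · have hn0' : 0 < n₀ := by linarith
        nlinarith [sq_nonneg (sv * (2 * x') - n₀ * (2 * x)),
          sq_nonneg (sv * (2 * y') - n₀ * (2 * y)),
          sq_nonneg (sv * (w' - z') - n₀ * (w - z)),
          mul_pos hn0' h]
    have := mul_le_mul_of_nonneg_left hsvle hn0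
    nlinarith [this, hdot]
  · nlinarith [hA, hgt, hpos]
end
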